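/- As a symmetric operad, the labelled red and white trees are generated by the three trees T_≺, T_∘, T_⊙: every tree in BWTSL(n) with n ≥ 2 can be obtained from T_≺, T_∘ and T_⊙ by iterated compositions ∘_x and relabellings by permutations. -/
import Mathlib


open scoped Classical

/- A labelled red and white tree on `{1,…,n}` is encoded by the (laminar) family of the
sets `S(z)` of all labels carried by the subtree rooted at each node `z`; this determines
the tree completely (children of a node are the maximal proper members of the family
below it, its own labels are those not appearing in its children, and the condition that
an unlabelled node has at least two children is automatic). -/

/-- The children of the node `S` in the family `fam`: maximal members strictly below `S`. -/
def childrenF (fam : Finset (Finset ℕ)) (S : Finset ℕ) : Finset (Finset ℕ) :=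
  fam.filter fun T => T ⊂ S ∧ ∀ U ∈ fam, T ⊂ U → ¬ U ⊂ S

/-- The set of labels carried by the node `S` itself. -/
def labelsOf (fam : Finset (Finset ℕ)) (S : Finset ℕ) : Finset ℕ :=
  S \ (childrenF fam S).biUnion id

/-- `fam` encodes a labelled red and white tree on `{1,…,n}` (`fam ∈ BWTSL(n)`). -/
def IsRWTree (n : ℕ) (fam : Finset (Finset ℕ)) : Prop :=
  (∀ S ∈ fam, S.Nonempty ∧ S ⊆ Finset.Icc 1 n) ∧
  Finset.Icc 1 n ∈ fam ∧
  ∀ S ∈ fam, ∀ T ∈ fam, S ⊆ T ∨ T ⊆ S ∨ Disjoint S T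

/-- The tree is recursively labelled: the total label set of every subtree is an
interval of consecutive integers. -/
def IsRecursive (fam : Finset (Finset ℕ)) : Prop :=
  ∀ S ∈ fam, ∃ a b : ℕ, S = Finset.Icc a b

/-- The node `S` is red: it carries no label and all of its children are white. -/
def IsRed (fam : Finset (Finset ℕ)) (S : Finset ℕ) : Prop :=
  labelsOf fam S = ∅ ∧ ∀ T ∈ childrenF fam S, ¬ IsRed fam T
termination_by S.card
decreasing_by
  rename_i hT
  exact Finset.card_lt_card (Finset.mem_filter.mp hT).2.1

/-- Relabelling of the first tree in `T₁ ∘ₓ T₂` (`n` the arity of `T₂`): labels `j > x`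
are shifted by `n - 1` and the label `x` becomes the whole block `{x,…,x+n-1}`. -/
def relabL (x n : ℕ) (T : Finset ℕ) : Finset ℕ :=
  T.biUnion fun j =>
    if j < x then {j} else if j = x then Finset.Icc x (x + n - 1) else {j + n - 1}

/-- Relabelling of the second tree in `T₁ ∘ₓ T₂`: labels are shifted by `x - 1`. -/
def relabR (x : ℕ) (T : Finset ℕ) : Finset ℕ := T.image fun j => x + j - 1

/-- The composition `T₁ ∘ₓ T₂` of labelled red and white trees (in the laminar-family
encoding), `n` being the arity of `T₂`.  The four cases correspond to the rules
(R1), (R3), (R2) and (W) respectively:  if the root of `T₂` is red then the result is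
`T₂` when `T₁` is the single node labelled `x` (R1); the node `z` of `T₁` containing `x`
is deleted and the children of the root of `T₂` are attached to its parent when `z` is a
leaf whose only label is `x` (R3); otherwise the root of `T₂` becomes a new child of `z`
(R2).  If the root of `T₂` is not red, it is merged with `z` (W). -/
noncomputable def rwCompose (n x : ℕ) (fam₁ fam₂ : Finset (Finset ℕ)) :
    Finset (Finset ℕ) :=
  let B : Finset ℕ := Finset.Icc x (x + n - 1)
  let f₁ := fam₁.image (relabL x n)
  let f₂ := fam₂.image (relabR x)
  if IsRed fam₂ (Finset.Icc 1 n) then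
    if fam₁ = {{x}} then f₂
    else if {x} ∈ fam₁ then (f₁ \ {B}) ∪ (f₂ \ {B})
    else f₁ ∪ f₂
  else f₁ ∪ (f₂ \ {B})

/-- The unit: the single node labelled `{1}`. -/
def unitT : Finset (Finset ℕ) := {{1}}
/-- `T_≺`: white root labelled `{1}` with a single white child labelled `{2}`. -/
def Tprec : Finset (Finset ℕ) := {{1, 2}, {2}}
/-- `T_≻`: white root labelled `{2}` with a single white child labelled `{1}`. -/
def Tsucc : Finset (Finset ℕ) := {{1, 2}, {1}}
/-- `T_∘`: a single white node labelled `{1,2}`. -/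
def Tmid : Finset (Finset ℕ) := {{1, 2}}
/-- `T_⊙`: red empty root with two white children labelled `{1}` and `{2}`. -/
def Tdot : Finset (Finset ℕ) := {{1, 2}, {1}, {2}}

/-- The closure of a family of generators under compositions `∘ₓ` and relabelling by
permutations of `{1,…,n}`. -/
inductive RWSymClosure (G : ℕ → Finset (Finset ℕ) → Prop) : ℕ → Finset (Finset ℕ) → Prop
  | gen {n : ℕ} {fam : Finset (Finset ℕ)} : G n fam → RWSymClosure G n fam
  | comp {m n x : ℕ} {fam₁ fam₂ : Finset (Finset ℕ)} :
      RWSymClosure G m fam₁ → RWSymClosure G n fam₂ → 1 ≤ x → x ≤ m →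
      RWSymClosure G (m + n - 1) (rwCompose n x fam₁ fam₂)
  | perm {n : ℕ} {fam : Finset (Finset ℕ)} (σ : Equiv.Perm ℕ) :
      (∀ j ∉ Finset.Icc 1 n, σ j = j) → RWSymClosure G n fam →
      RWSymClosure G n (fam.image fun S => S.image fun j => σ j)

/-- The three generators `T_≺, T_∘, T_⊙`. -/
def GenSym3 (n : ℕ) (fam : Finset (Finset ℕ)) : Prop :=
  n = 2 ∧ (fam = Tprec ∨ fam = Tmid ∨ fam = Tdot)

lemma mem_relabL {x n : ℕ} {T : Finset ℕ} {k : ℕ} :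
    k ∈ relabL x n T ↔ ∃ j ∈ T,
      (j < x ∧ k = j) ∨ (j = x ∧ x ≤ k ∧ k ≤ x + n - 1) ∨ (x < j ∧ k = j + n - 1) := by
  simp only [relabL, Finset.mem_biUnion]
  constructor
  · rintro ⟨j, hj, hk⟩
    refine ⟨j, hj, ?_⟩
    split_ifs at hk with h1 h2
    · exact Or.inl ⟨h1, by simpa using hk⟩
    · simp only [Finset.mem_Icc] at hk; exact Or.inr (Or.inl ⟨h2, hk⟩)
    · exact Or.inr (Or.inr ⟨by omega, by simpa using hk⟩)
  · rintro ⟨j, hj, hc⟩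
    refine ⟨j, hj, ?_⟩
    split_ifs with h1 h2
    · simp only [Finset.mem_singleton]; omega
    · simp only [Finset.mem_Icc]; omega
    · simp only [Finset.mem_singleton]; omega

lemma relabL_eq_self {x n : ℕ} {T : Finset ℕ} (h : ∀ j ∈ T, j < x) :
    relabL x n T = T := by
  ext k
  rw [mem_relabL]
  constructor
  · rintro ⟨j, hj, hc⟩
    have := h j hj
    rcases hc with ⟨_, rfl⟩ | ⟨rfl, _⟩ | ⟨h1, rfl⟩ <;> first | exact hj | omega
  · intro hk; exact ⟨k, hk, Or.inl ⟨h k hk, rfl⟩⟩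

lemma relabL_Icc_one {x n t : ℕ} (hx1 : 1 ≤ x) (hxt : x ≤ t) (hn : 1 ≤ n) :
    relabL x n (Finset.Icc 1 t) = Finset.Icc 1 (t + n - 1) := by
  ext k
  rw [mem_relabL]
  simp only [Finset.mem_Icc]
  constructor
  · rintro ⟨j, hj, hc⟩; omega
  · intro hk
    rcases lt_or_ge k x with h | h
    · exact ⟨k, by omega, Or.inl ⟨h, rfl⟩⟩
    · rcases le_or_gt k (x + n - 1) with h2 | h2
      · exact ⟨x, by omega, Or.inr (Or.inl ⟨rfl, h, h2⟩)⟩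
      · exact ⟨k - n + 1, by omega, Or.inr (Or.inr ⟨by omega, by omega⟩)⟩

lemma relabL_singleton_self {x n : ℕ} : relabL x n {x} = Finset.Icc x (x + n - 1) := by
  ext k
  rw [mem_relabL]
  simp only [Finset.mem_singleton, Finset.mem_Icc]
  constructor
  · rintro ⟨j, rfl, hc⟩; omega
  · intro hk; exact ⟨x, rfl, Or.inr (Or.inl ⟨rfl, hk.1, hk.2⟩)⟩

lemma relabR_image {s : ℕ} (hs : 1 ≤ s) {U : Finset ℕ} (hU : ∀ j ∈ U, s ≤ j) :
    relabR s (U.image fun j => j - (s - 1)) = U := by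
  unfold relabR
  rw [Finset.image_image]
  conv_rhs => rw [← Finset.image_id (s := U)]
  apply Finset.image_congr
  intro j hj
  have := hU j hj
  simp only [Function.comp_apply, id_eq]
  omega

lemma perm_mem_Icc {n : ℕ} {σ : Equiv.Perm ℕ} (hfix : ∀ j ∉ Finset.Icc 1 n, σ j = j)
    {j : ℕ} (hj : j ∈ Finset.Icc 1 n) : σ j ∈ Finset.Icc 1 n := by
  by_contra h
  have h2 : σ (σ j) = σ j := hfix _ h
  have h3 : σ j = j := σ.injective h2
  exact h (by rw [h3]; exact hj)

lemma perm_symm_fix {n : ℕ} {σ : Equiv.Perm ℕ} (hfix : ∀ j ∉ Finset.Icc 1 n, σ j = j) :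
    ∀ j ∉ Finset.Icc 1 n, σ.symm j = j := by
  intro j hj
  have : σ (σ.symm j) = j := σ.apply_symm_apply j
  nth_rewrite 2 [← hfix j hj] at this
  exact σ.injective this

lemma perm_image_subset {n : ℕ} {σ : Equiv.Perm ℕ} (hfix : ∀ j ∉ Finset.Icc 1 n, σ j = j)
    {U : Finset ℕ} (hU : U ⊆ Finset.Icc 1 n) : U.image σ ⊆ Finset.Icc 1 n := by
  intro k hk
  obtain ⟨j, hj, rfl⟩ := Finset.mem_image.mp hk
  exact perm_mem_Icc hfix (hU hj)

lemma perm_image_Icc {n : ℕ} {σ : Equiv.Perm ℕ} (hfix : ∀ j ∉ Finset.Icc 1 n, σ j = j) :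
    (Finset.Icc 1 n).image σ = Finset.Icc 1 n := by
  apply Finset.eq_of_subset_of_card_le (perm_image_subset hfix Finset.Subset.rfl)
  rw [Finset.card_image_of_injective _ σ.injective]

lemma exists_perm : ∀ (k : ℕ) (n : ℕ) (A B : Finset ℕ), A.card = k → B.card = k →
    A ⊆ Finset.Icc 1 n → B ⊆ Finset.Icc 1 n →
    ∃ σ : Equiv.Perm ℕ, (∀ j ∉ Finset.Icc 1 n, σ j = j) ∧ A.image σ = B := by
  intro k
  induction k with
  | zero =>
    intro n A B hA hB _ _
    refine ⟨1, fun j _ => rfl, ?_⟩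
    rw [Finset.card_eq_zero] at hA hB
    subst hA; subst hB; simp
  | succ k ih =>
    intro n A B hA hB hAn hBn
    have hAne : A.Nonempty := Finset.card_pos.mp (by omega)
    have hBne : B.Nonempty := Finset.card_pos.mp (by omega)
    obtain ⟨a, ha⟩ := hAne
    obtain ⟨b, hb⟩ := hBne
    obtain ⟨σ', hfix', himg'⟩ := ih n (A.erase a) (B.erase b)
      (by rw [Finset.card_erase_of_mem ha, hA]; omega)
      (by rw [Finset.card_erase_of_mem hb, hB]; omega)
      ((Finset.erase_subset _ _).trans hAn) ((Finset.erase_subset _ _).trans hBn)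
    refine ⟨σ'.trans (Equiv.swap (σ' a) b), ?_, ?_⟩
    · intro j hj
      have h1 : σ' j = j := hfix' j hj
      simp only [Equiv.trans_apply, h1]
      apply Equiv.swap_apply_of_ne_of_ne
      · intro h
        have : σ' a ∈ Finset.Icc 1 n := perm_mem_Icc hfix' (hAn ha)
        exact hj (h ▸ this)
      · intro h; exact hj (h ▸ hBn hb)
    · have hσa : σ' a ∉ B.erase b := by
        intro hmem
        rw [← himg'] at hmem
        obtain ⟨c, hc, hc2⟩ := Finset.mem_image.mp hmem
        have := σ'.injective hc2
        subst this
        exact (Finset.mem_erase.mp hc).1 rfl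
      have hstep : A.image (σ'.trans (Equiv.swap (σ' a) b)) =
          (A.image σ').image (Equiv.swap (σ' a) b) := by
        rw [Finset.image_image]; rfl
      rw [hstep, ← Finset.insert_erase ha, Finset.image_insert, Finset.image_insert,
        himg', Equiv.swap_apply_left]
      have : (B.erase b).image (Equiv.swap (σ' a) b) = B.erase b := by
        conv_rhs => rw [← Finset.image_id (s := B.erase b)]
        apply Finset.image_congr
        intro c hc
        simp only [id_eq]
        apply Equiv.swap_apply_of_ne_of_ne
        · intro h; exact hσa (h ▸ hc)
        · intro h; exact (Finset.mem_erase.mp hc).1 h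
      rw [this, Finset.insert_erase hb]

lemma tdot_red : IsRed Tdot (Finset.Icc 1 2) := by
  rw [IsRed]
  refine ⟨by decide, ?_⟩
  have hc : childrenF Tdot (Finset.Icc 1 2) = {{1},{2}} := by decide
  rw [hc]
  intro T hT
  have hT' : T = {1} ∨ T = {2} := by
    simpa using hT
  rw [IsRed]
  rcases hT' with rfl | rfl <;> · rintro ⟨h1, -⟩; revert h1; decide
lemma tsucc_not_red : ¬ IsRed Tsucc (Finset.Icc 1 2) := by
  rw [IsRed]; rintro ⟨h1, -⟩; revert h1; decide
lemma tprec_not_red : ¬ IsRed Tprec (Finset.Icc 1 2) := by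
  rw [IsRed]; rintro ⟨h1, -⟩; revert h1; decide
lemma tmid_not_red : ¬ IsRed Tmid (Finset.Icc 1 2) := by
  rw [IsRed]; rintro ⟨h1, -⟩; revert h1; decide

lemma isRWTree_image_perm {n : ℕ} {σ : Equiv.Perm ℕ} (hfix : ∀ j ∉ Finset.Icc 1 n, σ j = j)
    {fam : Finset (Finset ℕ)} (h : IsRWTree n fam) :
    IsRWTree n (fam.image fun S => S.image fun j => σ j) := by
  obtain ⟨h1, h2, h3⟩ := h
  refine ⟨?_, ?_, ?_⟩
  · intro S hS
    obtain ⟨U, hU, rfl⟩ := Finset.mem_image.mp hS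
    exact ⟨(h1 U hU).1.image _, perm_image_subset hfix (h1 U hU).2⟩
  · refine Finset.mem_image.mpr ⟨Finset.Icc 1 n, h2, perm_image_Icc hfix⟩
  · intro S hS T hT
    obtain ⟨U, hU, rfl⟩ := Finset.mem_image.mp hS
    obtain ⟨V, hV, rfl⟩ := Finset.mem_image.mp hT
    rcases h3 U hU V hV with hc | hc | hc
    · exact Or.inl (Finset.image_subset_image hc)
    · exact Or.inr (Or.inl (Finset.image_subset_image hc))
    · exact Or.inr (Or.inr ((Finset.disjoint_image σ.injective).mpr hc))

lemma closure_tprec : RWSymClosure GenSym3 2 Tprec := RWSymClosure.gen ⟨rfl, Or.inl rfl⟩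
lemma closure_tmid : RWSymClosure GenSym3 2 Tmid := RWSymClosure.gen ⟨rfl, Or.inr (Or.inl rfl)⟩
lemma closure_tdot : RWSymClosure GenSym3 2 Tdot := RWSymClosure.gen ⟨rfl, Or.inr (Or.inr rfl)⟩

lemma closure_tsucc : RWSymClosure GenSym3 2 Tsucc := by
  have hfix : ∀ j ∉ Finset.Icc 1 2, Equiv.swap 1 2 j = j := by
    intro j hj
    simp only [Finset.mem_Icc] at hj
    apply Equiv.swap_apply_of_ne_of_ne <;> omega
  have h := RWSymClosure.perm (G := GenSym3) (Equiv.swap 1 2) hfix closure_tprec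
  have heq : (Tprec.image fun S => S.image fun j => Equiv.swap 1 2 j) = Tsucc := by
    have e1 : ({1, 2} : Finset ℕ).image (fun j => Equiv.swap 1 2 j) = {1, 2} := by
      ext k
      simp [Equiv.swap_apply_def]
      omega
    have e2 : ({2} : Finset ℕ).image (fun j => Equiv.swap 1 2 j) = {1} := by
      ext k
      simp [Equiv.swap_apply_def]
    unfold Tprec Tsucc
    rw [Finset.image_insert, Finset.image_singleton, e1, e2]
  rwa [heq] at h

lemma closure_single : ∀ n, 2 ≤ n → RWSymClosure GenSym3 n {Finset.Icc 1 n} := by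
  intro n hn
  induction n, hn using Nat.le_induction with
  | base =>
    have h2 : Finset.Icc 1 2 = ({1, 2} : Finset ℕ) := by decide
    rw [h2]; exact closure_tmid
  | succ m hm ih =>
    have h := RWSymClosure.comp (x := 1) ih closure_tmid le_rfl (by omega)
    have harr : m + 2 - 1 = m + 1 := by omega
    rw [harr] at h
    have heq : rwCompose 2 1 {Finset.Icc 1 m} Tmid = {Finset.Icc 1 (m + 1)} := by
      unfold rwCompose
      rw [if_neg tmid_not_red]
      have e1 : ({Finset.Icc 1 m} : Finset (Finset ℕ)).image (relabL 1 2)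
          = {Finset.Icc 1 (m + 1)} := by
        rw [Finset.image_singleton, relabL_Icc_one (by omega) (by omega) (by omega)]
        norm_num
      have e2 : Tmid.image (relabR 1) = {Finset.Icc 1 (1 + 2 - 1)} := by
        decide
      rw [e1, e2]
      simp
    rwa [heq] at h

lemma relabR_pair {x : ℕ} (hx : 1 ≤ x) : relabR x {1, 2} = {x, x + 1} := by
  ext k; simp [relabR]
lemma relabR_one {x : ℕ} (hx : 1 ≤ x) : relabR x {1} = {x} := by
  ext k; simp [relabR]
lemma relabR_two {x : ℕ} (hx : 1 ≤ x) : relabR x {2} = {x + 1} := by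
  ext k; simp [relabR]

lemma image_single_relabL {x m k : ℕ} (h : k < x) :
    ((Finset.Icc 1 k).image fun a => ({a} : Finset ℕ)).image (relabL x m)
      = (Finset.Icc 1 k).image fun a => ({a} : Finset ℕ) := by
  rw [Finset.image_image]
  apply Finset.image_congr
  intro a ha
  simp only [Finset.mem_coe, Finset.mem_Icc] at ha
  show relabL x m {a} = {a}
  apply relabL_eq_self
  intro j hj
  simp only [Finset.mem_singleton] at hj
  omega

/-- canonical flat family -/
def famC (n k : ℕ) : Finset (Finset ℕ) :=
  insert (Finset.Icc 1 n) ((Finset.Icc 1 k).image fun a => ({a} : Finset ℕ))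

lemma closure_famC : ∀ n, 2 ≤ n → ∀ k, k ≤ n → RWSymClosure GenSym3 n (famC n k) := by
  intro n hn
  induction n, hn using Nat.le_induction with
  | base =>
    intro k hk
    interval_cases k
    · have h : famC 2 0 = {Finset.Icc 1 2} := by decide
      rw [h]; exact closure_single 2 le_rfl
    · have h : famC 2 1 = Tsucc := by decide
      rw [h]; exact closure_tsucc
    · have h : famC 2 2 = Tdot := by decide
      rw [h]; exact closure_tdot
  | succ n hn ih =>
    intro k hk
    rcases Nat.eq_zero_or_pos k with rfl | hkpos
    · have h : famC (n+1) 0 = {Finset.Icc 1 (n+1)} := by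
        unfold famC
        rw [show Finset.Icc 1 0 = (∅ : Finset ℕ) by simp, Finset.image_empty]
        rfl
      rw [h]; exact closure_single (n+1) (by omega)
    rcases eq_or_lt_of_le hk with rfl | hklt
    · -- full red case k = n+1
      have h := RWSymClosure.comp (x := n) (ih n le_rfl) closure_tdot (by omega) le_rfl
      rw [show n + 2 - 1 = n + 1 by omega] at h
      have heq : rwCompose 2 n (famC n n) Tdot = famC (n+1) (n+1) := by
        have cond1 : ¬ (famC n n = {{n}}) := by
          intro hcon
          have h1 : Finset.Icc 1 n ∈ famC n n := Finset.mem_insert_self _ _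
          rw [hcon, Finset.mem_singleton] at h1
          have : (1 : ℕ) ∈ Finset.Icc 1 n := by simp; omega
          rw [h1] at this
          simp at this; omega
        have cond2 : ({n} : Finset ℕ) ∈ famC n n := by
          refine Finset.mem_insert.mpr (Or.inr ?_)
          exact Finset.mem_image.mpr ⟨n, by simp; omega, rfl⟩
        unfold rwCompose
        simp only []
        rw [if_pos tdot_red, if_neg cond1, if_pos cond2]
        have hB : Finset.Icc n (n + 2 - 1) = ({n, n + 1} : Finset ℕ) := by
          ext j; simp [Finset.mem_Icc]; omega
        have hsplit : Finset.Icc 1 n = insert n (Finset.Icc 1 (n - 1)) := by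
          ext j; simp [Finset.mem_Icc]; omega
        have hf1 : (famC n n).image (relabL n 2) =
            insert (Finset.Icc 1 (n + 1))
              (insert ({n, n + 1} : Finset ℕ)
                ((Finset.Icc 1 (n-1)).image fun a => ({a} : Finset ℕ))) := by
          unfold famC
          rw [Finset.image_insert, relabL_Icc_one (by omega) (by omega) (by omega),
            show n + 2 - 1 = n + 1 by omega]
          congr 1
          rw [hsplit, Finset.image_insert, Finset.image_insert,
            image_single_relabL (by omega), relabL_singleton_self,
            show Finset.Icc n (n + 2 - 1) = ({n, n+1} : Finset ℕ) from hB]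
        have hf2 : Tdot.image (relabR n) = {{n, n+1}, {n}, {n+1}} := by
          unfold Tdot
          rw [Finset.image_insert, Finset.image_insert, Finset.image_singleton,
            relabR_pair (by omega), relabR_one (by omega), relabR_two (by omega)]
        rw [hf1, hf2, hB]
        -- now pure set manipulation
        have hR : Finset.Icc 1 (n+1) ≠ ({n, n+1} : Finset ℕ) := by
          intro hcon
          have : (1:ℕ) ∈ Finset.Icc 1 (n+1) := by simp
          rw [hcon] at this; simp at this; omega
        have hsing : ∀ a : ℕ, ({a} : Finset ℕ) ≠ ({n, n+1} : Finset ℕ) := by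
          intro a hcon
          have h1 : (n:ℕ) ∈ ({n, n+1} : Finset ℕ) := by simp
          have h2 : (n+1:ℕ) ∈ ({n, n+1} : Finset ℕ) := by simp
          rw [← hcon] at h1 h2
          simp at h1 h2; omega
        have htgt : famC (n+1) (n+1) =
            insert (Finset.Icc 1 (n+1))
              (insert ({n} : Finset ℕ) (insert ({n+1} : Finset ℕ)
                ((Finset.Icc 1 (n-1)).image fun a => ({a} : Finset ℕ)))) := by
          unfold famC
          congr 1
          rw [show Finset.Icc 1 (n+1) = insert n (insert (n+1) (Finset.Icc 1 (n-1))) by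
            ext j; simp [Finset.mem_Icc]; omega]
          rw [Finset.image_insert, Finset.image_insert]
        rw [htgt]
        ext U
        simp only [Finset.mem_union, Finset.mem_sdiff, Finset.mem_insert,
          Finset.mem_singleton, Finset.mem_image]
        constructor
        · rintro (⟨(rfl | rfl | ⟨a, ha, rfl⟩), hne⟩ | ⟨(rfl | rfl | rfl), hne⟩)
          · exact Or.inl rfl
          · exact absurd rfl hne
          · exact Or.inr (Or.inr (Or.inr ⟨a, ha, rfl⟩))
          · exact absurd rfl hne
          · exact Or.inr (Or.inl rfl)
          · exact Or.inr (Or.inr (Or.inl rfl))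
        · rintro (rfl | rfl | rfl | ⟨a, ha, rfl⟩)
          · exact Or.inl ⟨Or.inl rfl, hR⟩
          · exact Or.inr ⟨Or.inr (Or.inl rfl), hsing n⟩
          · exact Or.inr ⟨Or.inr (Or.inr rfl), hsing (n+1)⟩
          · exact Or.inl ⟨Or.inr (Or.inr ⟨a, ha, rfl⟩), hsing a⟩
      rwa [heq] at h
    · -- middle case 1 ≤ k ≤ n
      have hkn : k ≤ n := by omega
      have h := RWSymClosure.comp (x := k) (ih (k-1) (by omega)) closure_tsucc
        (by omega) (by omega)
      rw [show n + 2 - 1 = n + 1 by omega] at h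
      have heq : rwCompose 2 k (famC n (k-1)) Tsucc = famC (n+1) k := by
        unfold rwCompose
        simp only []
        rw [if_neg tsucc_not_red]
        have hB : Finset.Icc k (k + 2 - 1) = ({k, k + 1} : Finset ℕ) := by
          ext j; simp [Finset.mem_Icc]; omega
        have hf1 : (famC n (k-1)).image (relabL k 2) =
            insert (Finset.Icc 1 (n + 1))
              ((Finset.Icc 1 (k-1)).image fun a => ({a} : Finset ℕ)) := by
          unfold famC
          rw [Finset.image_insert, relabL_Icc_one (by omega) (by omega) (by omega),
            show n + 2 - 1 = n + 1 by omega, image_single_relabL (by omega)]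
        have hf2 : Tsucc.image (relabR k) = {{k, k+1}, {k}} := by
          unfold Tsucc
          rw [Finset.image_insert, Finset.image_singleton,
            relabR_pair (by omega), relabR_one (by omega)]
        rw [hf1, hf2, hB]
        have hkne : ({k} : Finset ℕ) ≠ ({k, k+1} : Finset ℕ) := by
          intro hcon
          have : (k+1:ℕ) ∈ ({k, k+1} : Finset ℕ) := by simp
          rw [← hcon] at this; simp at this
        have htgt : famC (n+1) k =
            insert (Finset.Icc 1 (n+1))
              (insert ({k} : Finset ℕ)
                ((Finset.Icc 1 (k-1)).image fun a => ({a} : Finset ℕ))) := by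
          unfold famC
          congr 1
          rw [show Finset.Icc 1 k = insert k (Finset.Icc 1 (k-1)) by
            ext j; simp [Finset.mem_Icc]; omega]
          rw [Finset.image_insert]
        rw [htgt]
        ext U
        simp only [Finset.mem_union, Finset.mem_sdiff, Finset.mem_insert,
          Finset.mem_singleton, Finset.mem_image]
        constructor
        · rintro ((rfl | ⟨a, ha, rfl⟩) | ⟨(rfl | rfl), hne⟩)
          · exact Or.inl rfl
          · exact Or.inr (Or.inr ⟨a, ha, rfl⟩)
          · exact absurd rfl hne
          · exact Or.inr (Or.inl rfl)
        · rintro (rfl | rfl | ⟨a, ha, rfl⟩)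
          · exact Or.inl (Or.inl rfl)
          · exact Or.inr ⟨Or.inr rfl, hkne⟩
          · exact Or.inl (Or.inr ⟨a, ha, rfl⟩)
      rwa [heq] at h

lemma closure_flat {n : ℕ} (hn : 2 ≤ n) {A : Finset ℕ} (hA : A ⊆ Finset.Icc 1 n) :
    RWSymClosure GenSym3 n
      (insert (Finset.Icc 1 n) (A.image fun a => ({a} : Finset ℕ))) := by
  have hcard : A.card ≤ n := by
    have := Finset.card_le_card hA
    simpa [Nat.card_Icc] using this
  obtain ⟨σ, hfix, himg⟩ := exists_perm A.card n (Finset.Icc 1 A.card) A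
    (by simp [Nat.card_Icc]) rfl (Finset.Icc_subset_Icc le_rfl hcard) hA
  have h := RWSymClosure.perm (G := GenSym3) σ hfix (closure_famC n hn A.card hcard)
  have heq : ((famC n A.card).image fun S => S.image fun j => σ j) =
      insert (Finset.Icc 1 n) (A.image fun a => ({a} : Finset ℕ)) := by
    unfold famC
    rw [Finset.image_insert]
    congr 1
    · exact perm_image_Icc hfix
    · have hc2 : (Finset.image (⇑σ) (Finset.Icc 1 A.card)).card = A.card := by rw [himg]
      rw [Finset.image_image, ← himg, hc2, Finset.image_image]
      apply Finset.image_congr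
      intro a _
      simp
  rwa [heq] at h

lemma split_compose {n s m : ℕ} (hs : 2 ≤ s) (hm : 2 ≤ m) (hsm : s + m = n + 1)
    {fam : Finset (Finset ℕ)} (htree : IsRWTree n fam)
    (hS : Finset.Icc s n ∈ fam)
    (hmax : ∀ U ∈ fam, Finset.Icc s n ⊆ U → U = Finset.Icc s n ∨ U = Finset.Icc 1 n) :
    ∃ f₁ f₂ : Finset (Finset ℕ), IsRWTree s f₁ ∧ IsRWTree m f₂ ∧
      fam = rwCompose m s f₁ f₂ := by
  obtain ⟨hne, hR, hlam⟩ := htree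
  have hsn : s ≤ n - 1 := by omega
  have hn2 : 2 ≤ n := by omega
  set S : Finset ℕ := Finset.Icc s n with hSdef
  set R : Finset ℕ := Finset.Icc 1 n with hRdef
  have hclass : ∀ U ∈ fam, ¬ U ⊆ S → (U ⊆ Finset.Icc 1 (s - 1) ∨ U = R) := by
    intro U hU hno
    rcases hlam U hU S hS with hc | hc | hc
    · exact absurd hc hno
    · rcases hmax U hU hc with rfl | rfl
      · exact absurd Finset.Subset.rfl hno
      · exact Or.inr rfl
    · left
      intro j hj
      have hj1 : j ∈ R := (hne U hU).2 hj
      have hj2 : j ∉ S := Finset.disjoint_left.mp hc hj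
      simp only [hRdef, Finset.mem_Icc] at hj1
      simp only [hSdef, Finset.mem_Icc] at hj2
      simp only [Finset.mem_Icc]
      omega
  have hRnotsub : ¬ R ⊆ S := by
    intro hsub
    have h1 : (1 : ℕ) ∈ R := by simp [hRdef, Finset.mem_Icc]; omega
    have := hsub h1
    simp [hSdef, Finset.mem_Icc] at this
    omega
  have hRnotsmall : ¬ R ⊆ Finset.Icc 1 (s - 1) := by
    intro hsub
    have h1 : (n : ℕ) ∈ R := by simp [hRdef, Finset.mem_Icc]; omega
    have := hsub h1
    simp [Finset.mem_Icc] at this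
    omega
  set T2 : Finset (Finset ℕ) :=
    (fam.filter fun U => U ⊆ S).image (Finset.image fun j => j - (s - 1)) with hT2def
  set contract : Finset ℕ → Finset ℕ :=
    (fun U => if U ⊆ Finset.Icc 1 (s - 1) then U else Finset.Icc 1 s) with hcondef
  set T1r : Finset (Finset ℕ) := (fam.filter fun U => ¬ U ⊆ S).image contract with hT1def
  -- T2 is a tree on [1,m]
  have hStop : S.image (fun j => j - (s - 1)) = Finset.Icc 1 m := by
    ext k
    simp only [Finset.mem_image, hSdef, Finset.mem_Icc]
    constructor
    · rintro ⟨j, hj, rfl⟩; omega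
    · intro hk; exact ⟨k + s - 1, by omega, by omega⟩
  have htree2 : IsRWTree m T2 := by
    refine ⟨?_, ?_, ?_⟩
    · intro X hX
      obtain ⟨U, hU, rfl⟩ := Finset.mem_image.mp hX
      rw [Finset.mem_filter] at hU
      refine ⟨(hne U hU.1).1.image _, ?_⟩
      intro k hk
      obtain ⟨j, hj, rfl⟩ := Finset.mem_image.mp hk
      have := hU.2 hj
      simp only [hSdef, Finset.mem_Icc] at this
      simp only [Finset.mem_Icc]
      omega
    · exact Finset.mem_image.mpr ⟨S, Finset.mem_filter.mpr ⟨hS, Finset.Subset.rfl⟩, hStop⟩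
    · intro X hX Y hY
      obtain ⟨U, hU, rfl⟩ := Finset.mem_image.mp hX
      obtain ⟨V, hV, rfl⟩ := Finset.mem_image.mp hY
      rw [Finset.mem_filter] at hU hV
      rcases hlam U hU.1 V hV.1 with hc | hc | hc
      · exact Or.inl (Finset.image_subset_image hc)
      · exact Or.inr (Or.inl (Finset.image_subset_image hc))
      · refine Or.inr (Or.inr ?_)
        rw [Finset.disjoint_left]
        intro k hk hk2
        obtain ⟨j1, hj1, rfl⟩ := Finset.mem_image.mp hk
        obtain ⟨j2, hj2, he⟩ := Finset.mem_image.mp hk2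
        have ha := hU.2 hj1
        have hb := hV.2 hj2
        simp only [hSdef, Finset.mem_Icc] at ha hb
        have : j2 = j1 := by omega
        subst this
        exact Finset.disjoint_left.mp hc hj1 hj2
  -- T1r facts
  have hT1top : Finset.Icc 1 s ∈ T1r := by
    refine Finset.mem_image.mpr ⟨R, Finset.mem_filter.mpr ⟨hR, hRnotsub⟩, ?_⟩
    simp only [hcondef]
    rw [if_neg hRnotsmall]
  have hT1mem : ∀ X ∈ T1r, (X ⊆ Finset.Icc 1 (s - 1) ∧ X ∈ fam) ∨ X = Finset.Icc 1 s := by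
    intro X hX
    obtain ⟨U, hU, rfl⟩ := Finset.mem_image.mp hX
    rw [Finset.mem_filter] at hU
    rcases hclass U hU.1 hU.2 with hc | hc
    · left
      simp only [hcondef]
      rw [if_pos hc]
      exact ⟨hc, hU.1⟩
    · right
      simp only [hcondef]
      rw [if_neg (by rw [hc]; exact hRnotsmall)]
  have htree1r : IsRWTree s T1r := by
    refine ⟨?_, hT1top, ?_⟩
    · intro X hX
      rcases hT1mem X hX with ⟨hsm', hXfam⟩ | rfl
      · exact ⟨(hne X hXfam).1, hsm'.trans (Finset.Icc_subset_Icc le_rfl (by omega))⟩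
      · exact ⟨⟨1, by simp [Finset.mem_Icc]; omega⟩, Finset.Subset.rfl⟩
    · intro X hX Y hY
      rcases hT1mem X hX with ⟨hx1, hx2⟩ | rfl
      · rcases hT1mem Y hY with ⟨hy1, hy2⟩ | rfl
        · exact hlam X hx2 Y hy2
        · exact Or.inl (hx1.trans (Finset.Icc_subset_Icc le_rfl (by omega)))
      · rcases hT1mem Y hY with ⟨hy1, hy2⟩ | rfl
        · exact Or.inr (Or.inl (hy1.trans (Finset.Icc_subset_Icc le_rfl (by omega))))
        · exact Or.inl Finset.Subset.rfl
  -- key image computations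
  have hi1 : T1r.image (relabL s m) = fam.filter fun U => ¬ U ⊆ S := by
    simp only [hT1def]
    rw [Finset.image_image]
    have : ∀ U ∈ (fam.filter fun U => ¬ U ⊆ S), (relabL s m ∘ contract) U = U := by
      intro U hU
      rw [Finset.mem_filter] at hU
      rcases hclass U hU.1 hU.2 with hc | hc
      · show relabL s m (contract U) = U
        simp only [hcondef]
        rw [if_pos hc]
        apply relabL_eq_self
        intro j hj
        have := hc hj
        simp only [Finset.mem_Icc] at this
        omega
      · show relabL s m (contract U) = U
        simp only [hcondef]
        rw [if_neg (by rw [hc]; exact hRnotsmall)]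
        rw [relabL_Icc_one (by omega) (by omega) (by omega), hc, hRdef]
        congr 1
        omega
    calc (fam.filter fun U => ¬ U ⊆ S).image (relabL s m ∘ contract)
        = (fam.filter fun U => ¬ U ⊆ S).image id := Finset.image_congr (by
          intro U hU
          exact this U (by simpa using hU))
      _ = _ := Finset.image_id
  have hi2 : T2.image (relabR s) = fam.filter fun U => U ⊆ S := by
    simp only [hT2def]
    rw [Finset.image_image]
    calc (fam.filter fun U => U ⊆ S).image (relabR s ∘ Finset.image fun j => j - (s - 1))
        = (fam.filter fun U => U ⊆ S).image id := Finset.image_congr (by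
          intro U hU
          simp only [Finset.mem_coe, Finset.mem_filter] at hU
          show relabR s (U.image fun j => j - (s - 1)) = U
          apply relabR_image (by omega)
          intro j hj
          have := hU.2 hj
          simp only [hSdef, Finset.mem_Icc] at this
          omega)
      _ = _ := Finset.image_id
  have hBeq : Finset.Icc s (s + m - 1) = S := by
    rw [hSdef]
    congr 1
    omega
  by_cases hred : IsRed T2 (Finset.Icc 1 m)
  · -- red root: use T1r
    refine ⟨T1r, T2, htree1r, htree2, ?_⟩
    have c1 : T1r ≠ {{s}} := by
      intro hcon
      rw [hcon, Finset.mem_singleton] at hT1top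
      have : (1 : ℕ) ∈ Finset.Icc 1 s := by simp [Finset.mem_Icc]; omega
      rw [hT1top] at this
      simp at this
      omega
    have c2 : ({s} : Finset ℕ) ∉ T1r := by
      intro hcon
      rcases hT1mem _ hcon with ⟨hc, -⟩ | hc
      · have := hc (Finset.mem_singleton_self s)
        simp [Finset.mem_Icc] at this
        omega
      · have : (1 : ℕ) ∈ Finset.Icc 1 s := by simp [Finset.mem_Icc]; omega
        rw [← hc] at this
        simp at this
        omega
    unfold rwCompose
    rw [if_pos hred, if_neg c1, if_neg c2, hi1, hi2,
      Finset.union_comm, Finset.filter_union_filter_not_eq]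
  · -- white root: use insert {s} T1r
    refine ⟨insert {s} T1r, T2, ?_, htree2, ?_⟩
    · refine ⟨?_, Finset.mem_insert_of_mem hT1top, ?_⟩
      · intro X hX
        rcases Finset.mem_insert.mp hX with rfl | hX'
        · refine ⟨⟨s, Finset.mem_singleton_self s⟩, ?_⟩
          intro j hj
          rw [Finset.mem_singleton] at hj
          subst hj
          simp [Finset.mem_Icc]; omega
        · exact htree1r.1 X hX'
      · intro X hX Y hY
        rcases Finset.mem_insert.mp hX with rfl | hX'
        · rcases Finset.mem_insert.mp hY with rfl | hY'
          · exact Or.inl Finset.Subset.rfl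
          · rcases hT1mem Y hY' with ⟨hy1, -⟩ | rfl
            · refine Or.inr (Or.inr ?_)
              rw [Finset.disjoint_left]
              intro j hj
              rw [Finset.mem_singleton] at hj
              subst hj
              intro hcon
              have := hy1 hcon
              simp [Finset.mem_Icc] at this
              omega
            · refine Or.inl ?_
              intro j hj
              rw [Finset.mem_singleton] at hj
              subst hj
              simp [Finset.mem_Icc]; omega
        · rcases Finset.mem_insert.mp hY with rfl | hY'
          · rcases hT1mem X hX' with ⟨hx1, -⟩ | rfl
            · refine Or.inr (Or.inr ?_)
              rw [Finset.disjoint_right]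
              intro j hj
              rw [Finset.mem_singleton] at hj
              subst hj
              intro hcon
              have := hx1 hcon
              simp [Finset.mem_Icc] at this
              omega
            · refine Or.inr (Or.inl ?_)
              intro j hj
              rw [Finset.mem_singleton] at hj
              subst hj
              simp [Finset.mem_Icc]; omega
          · exact htree1r.2.2 X hX' Y hY'
    · unfold rwCompose
      rw [if_neg hred, Finset.image_insert, relabL_singleton_self, hBeq, hi1, hi2]
      ext U
      simp only [Finset.mem_union, Finset.mem_insert, Finset.mem_sdiff,
        Finset.mem_filter, Finset.mem_singleton]
      constructor
      · intro hU
        by_cases hsub : U ⊆ S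
        · by_cases heqS : U = S
          · exact Or.inl (Or.inl heqS)
          · exact Or.inr ⟨⟨hU, hsub⟩, heqS⟩
        · exact Or.inl (Or.inr ⟨hU, hsub⟩)
      · rintro ((rfl | ⟨h1, -⟩) | ⟨⟨h1, -⟩, -⟩)
        · exact hS
        · exact h1
        · exact h1

lemma closure_main : ∀ n : ℕ, 2 ≤ n → ∀ fam : Finset (Finset ℕ),
    IsRWTree n fam → RWSymClosure GenSym3 n fam := by
  intro n
  induction n using Nat.strong_induction_on with
  | _ n ih =>
    intro hn fam htree
    by_cases hbig : ∃ T ∈ fam, T ≠ Finset.Icc 1 n ∧ 2 ≤ T.card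
    · -- there is a proper member with at least two labels
      obtain ⟨T0, hT0, hT0ne, hT0card⟩ := hbig
      have hPne : (fam.filter fun U => U ≠ Finset.Icc 1 n).Nonempty :=
        ⟨T0, Finset.mem_filter.mpr ⟨hT0, hT0ne⟩⟩
      obtain ⟨Smax, hSmaxP, hSmaxmax⟩ :=
        Finset.exists_max_image (fam.filter fun U => U ≠ Finset.Icc 1 n) Finset.card hPne
      rw [Finset.mem_filter] at hSmaxP
      obtain ⟨hSfam, hSne⟩ := hSmaxP
      have hm2 : 2 ≤ Smax.card :=
        le_trans hT0card (hSmaxmax T0 (Finset.mem_filter.mpr ⟨hT0, hT0ne⟩))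
      have hsubR : Smax ⊆ Finset.Icc 1 n := (htree.1 _ hSfam).2
      have hmlt : Smax.card < n := by
        have hss : Smax ⊂ Finset.Icc 1 n :=
          Finset.ssubset_iff_subset_ne.mpr ⟨hsubR, hSne⟩
        have := Finset.card_lt_card hss
        simpa [Nat.card_Icc] using this
      set m := Smax.card with hmdef
      set s := n + 1 - m with hsdef
      have hmaxfam : ∀ U ∈ fam, Smax ⊆ U → U = Smax ∨ U = Finset.Icc 1 n := by
        intro U hU hsub
        by_cases hUR : U = Finset.Icc 1 n
        · exact Or.inr hUR
        · left
          have hle := hSmaxmax U (Finset.mem_filter.mpr ⟨hU, hUR⟩)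
          exact (Finset.eq_of_subset_of_card_le hsub hle).symm
      have hcards : (Finset.Icc s n).card = m := by
        simp [Nat.card_Icc]; omega
      obtain ⟨σ, hfix, himg⟩ := exists_perm m n (Finset.Icc s n) Smax hcards rfl
        (Finset.Icc_subset_Icc (by omega) le_rfl) hsubR
      have hfix' := perm_symm_fix hfix
      set fam₀ := fam.image (fun X => X.image fun j => σ.symm j) with hfam0
      have htree₀ : IsRWTree n fam₀ := isRWTree_image_perm hfix' htree
      have hsymmimg : Smax.image (fun j => σ.symm j) = Finset.Icc s n := by
        rw [← himg, Finset.image_image]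
        conv_rhs => rw [← Finset.image_id (s := Finset.Icc s n)]
        apply Finset.image_congr
        intro j _
        simp
      have hS0 : Finset.Icc s n ∈ fam₀ := Finset.mem_image.mpr ⟨Smax, hSfam, hsymmimg⟩
      have hmax₀ : ∀ U ∈ fam₀, Finset.Icc s n ⊆ U →
          U = Finset.Icc s n ∨ U = Finset.Icc 1 n := by
        intro U hU hsub
        obtain ⟨V, hV, rfl⟩ := Finset.mem_image.mp hU
        have h1 : Smax ⊆ V := by
          intro j hj
          have hj1 : σ.symm j ∈ Finset.Icc s n := by
            rw [← hsymmimg]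
            exact Finset.mem_image.mpr ⟨j, hj, rfl⟩
          obtain ⟨v, hv, he⟩ := Finset.mem_image.mp (hsub hj1)
          have : v = j := σ.symm.injective he
          subst this
          exact hv
        rcases hmaxfam V hV h1 with rfl | rfl
        · exact Or.inl hsymmimg
        · exact Or.inr (perm_image_Icc hfix')
      obtain ⟨f₁, f₂, ht1, ht2, heq⟩ :=
        split_compose (s := s) (m := m) (by omega) hm2 (by omega) htree₀ hS0 hmax₀
      have hc1 := ih s (by omega) (by omega) f₁ ht1
      have hc2 := ih m (by omega) (by omega) f₂ ht2
      have h := RWSymClosure.comp (x := s) hc1 hc2 (by omega) le_rfl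
      rw [show s + m - 1 = n by omega, ← heq] at h
      have h2 := RWSymClosure.perm (G := GenSym3) σ hfix h
      have hback : (fam₀.image fun X => X.image fun j => σ j) = fam := by
        rw [hfam0, Finset.image_image]
        conv_rhs => rw [← Finset.image_id (s := fam)]
        apply Finset.image_congr
        intro X _
        show ((X.image fun j => σ.symm j).image fun j => σ j) = id X
        rw [Finset.image_image]
        conv_rhs => rw [show id X = X.image id from (Finset.image_id).symm]
        apply Finset.image_congr
        intro j _
        simp
      rwa [hback] at h2
    · -- flat case
      have hflat : fam = insert (Finset.Icc 1 n)
          (((Finset.Icc 1 n).filter fun a => ({a} : Finset ℕ) ∈ fam).image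
            fun a => ({a} : Finset ℕ)) := by
        ext U
        simp only [Finset.mem_insert, Finset.mem_image, Finset.mem_filter]
        constructor
        · intro hU
          by_cases hUR : U = Finset.Icc 1 n
          · exact Or.inl hUR
          · right
            push_neg at hbig
            have hcard := hbig U hU hUR
            have hpos : 1 ≤ U.card := Finset.card_pos.mpr (htree.1 U hU).1
            have hcard1 : U.card = 1 := by omega
            obtain ⟨a, ha⟩ := Finset.card_eq_one.mp hcard1
            subst ha
            exact ⟨a, ⟨(htree.1 _ hU).2 (Finset.mem_singleton_self a), hU⟩, rfl⟩
        · rintro (rfl | ⟨a, ⟨-, ha2⟩, rfl⟩)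
          · exact htree.2.1
          · exact ha2
      rw [hflat]
      exact closure_flat hn (Finset.filter_subset _ _)

/-- As a symmetric operad, the labelled red and white trees are
generated by `T_≺`, `T_∘` and `T_⊙`: every labelled red and white tree on `{1,…,n}`
with `n ≥ 2` lies in the closure of these three trees under compositions and
relabellings. -/
theorem bwtsl_symmetric_generation (n : ℕ) (hn : 2 ≤ n) (fam : Finset (Finset ℕ))
    (h : IsRWTree n fam) : RWSymClosure GenSym3 n fam := closure_main n hn fam h
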